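/- arXiv:0811.3450 — 2 statements merged into one kernel-verified Lean document; each statement's English description precedes it below -/
import Mathlib

section
/- Let Γ be a uniform ranked poset whose maximum element x has rank d+1 (so Γ = Γ_x), and let R = R(Γ). Then d_Γ = Σ_{k=0}^{d} r_x(k), and for all 0 ≤ k ≤ n ≤ d and every s ∈ R(n,k) one has d_Γ·s = r_x(d−n−1)·s; in particular d_Γ·R(n,k) ⊆ R(n+1,k) (with d_Γ·R(d,k) = 0), so that (R(·,k), d_Γ) is a cochain complex. -/
set_option linter.unusedSectionVars false
set_option linter.unusedVariables false

open scoped Classical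

variable {Γ : Type*} [PartialOrder Γ] [OrderBot Γ] [Fintype Γ]

/-- `rk` is a rank function for the finite poset `Γ` (with least element `⊥`):
the bottom has rank `0` and ranks increase by one along covering relations.
Equivalently, all maximal chains in `[⊥, x]` have the same length `rk x`. -/
def IsRanked (rk : Γ → ℕ) : Prop :=
  rk ⊥ = 0 ∧ ∀ a b : Γ, a ⋖ b → rk b = rk a + 1

/-- `rankSet rk x n` is the set `S_x(n) = {y ≤ x : rk x - rk y = n}`. -/
def rankSet (rk : Γ → ℕ) (x : Γ) (n : ℕ) : Set Γ := {y | y ≤ x ∧ rk y + n = rk x}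

/-- `Γ` is uniform: for each `a`, the equivalence relation on `S_a(1)` generated by
`b ∼ c` whenever `S_b(1) ∩ S_c(1) ≠ ∅` has at most one equivalence class. -/
def Uniform (rk : Γ → ℕ) : Prop :=
  ∀ a b c : Γ, b ∈ rankSet rk a 1 → c ∈ rankSet rk a 1 →
    Relation.EqvGen
      (fun u v => u ∈ rankSet rk a 1 ∧ v ∈ rankSet rk a 1 ∧
        (rankSet rk u 1 ∩ rankSet rk v 1).Nonempty)
      b c

/-- `Γ' = Γ \ {⊥}`, indexing the generators `r_x`. -/
abbrev Vert (Γ : Type*) [PartialOrder Γ] [OrderBot Γ] := {x : Γ // x ≠ (⊥ : Γ)}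

variable (F : Type*) [Field F]

/-- The generator `r_x` of the tensor algebra `T(W)` on the vector space `W` with
basis `{r_x : x ∈ Γ'}`, realized as the free algebra on `Γ'`. -/
noncomputable def gen (x : Vert Γ) : FreeAlgebra F (Vert Γ) := FreeAlgebra.ι F x

/-- `r_x(n) = Σ_{y ∈ S_x(n)} r_y ∈ W` (which is `0` for `n ≥ rk x`). -/
noncomputable def rxn (rk : Γ → ℕ) (x : Γ) (n : ℕ) : FreeAlgebra F (Vert Γ) :=
  ∑ y ∈ Finset.univ.filter (fun y : Vert Γ => y.1 ∈ rankSet rk x n), gen F y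

/-- The quadratic relations spanning `I_2`: `r_x ⊗ r_y` for `y ∉ S_x(1)`, and
`r_x ⊗ r_x(1)`, for `x, y ∈ Γ'`. -/
inductive GRel (F : Type*) [Field F] {Γ : Type*} [PartialOrder Γ] [OrderBot Γ]
    [Fintype Γ] (rk : Γ → ℕ) :
    FreeAlgebra F (Vert Γ) → FreeAlgebra F (Vert Γ) → Prop
  | mono (x y : Vert Γ) (h : y.1 ∉ rankSet rk x.1 1) : GRel F rk (gen F x * gen F y) 0
  | adj (x : Vert Γ) : GRel F rk (gen F x * rxn F rk x.1 1) 0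

/-- The quadratic algebra `R(Γ) = T(W)/I`, where `I` is the two-sided ideal
generated by `I_2`. -/
abbrev RGamma (rk : Γ → ℕ) := RingQuot (GRel F rk)

/-- The image of `r_x` in `R(Γ)`. -/
noncomputable def rbar (rk : Γ → ℕ) (x : Vert Γ) : RGamma F rk :=
  RingQuot.mkAlgHom F (GRel F rk) (gen F x)

/-- The image of `r_x(n)` in `R(Γ)`. -/
noncomputable def rxnbar (rk : Γ → ℕ) (x : Γ) (n : ℕ) : RGamma F rk :=
  RingQuot.mkAlgHom F (GRel F rk) (rxn F rk x n)

/-- The right ideal `r_x R = {r_x · s : s ∈ R}`, as an `F`-submodule of `R(Γ)`. -/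
noncomputable def rIdeal (rk : Γ → ℕ) (x : Vert Γ) : Submodule F (RGamma F rk) :=
  LinearMap.range (LinearMap.mulLeft F (rbar F rk x))

/-- `H_x(n) = Σ_{y ∈ Γ', y ∉ S_x(n)} r_y R`. -/
noncomputable def Hsub (rk : Γ → ℕ) (x : Γ) (n : ℕ) : Submodule F (RGamma F rk) :=
  ⨆ (y : Vert Γ) (_ : y.1 ∉ rankSet rk x n), rIdeal F rk y

/-- `d_Γ = Σ_{y ∈ Γ'} r_y ∈ R(Γ)`. -/
noncomputable def dGamma (rk : Γ → ℕ) : RGamma F rk := ∑ y : Vert Γ, rbar F rk y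

/-- The degree-one component `W` of `T(W)`: the span of the generators `r_x`. -/
noncomputable def Wsub : Submodule F (FreeAlgebra F (Vert Γ)) :=
  Submodule.span F (Set.range (gen F (Γ := Γ)))

/-- The graded component `R_m` of `R(Γ)`: the image of `W^{⊗m}`. -/
noncomputable def Rcomp (rk : Γ → ℕ) (m : ℕ) : Submodule F (RGamma F rk) :=
  Submodule.map (RingQuot.mkAlgHom F (GRel F rk)).toLinearMap ((Wsub F (Γ := Γ)) ^ m)

/-- The subspace `R(n,k) = Σ_{y ∈ Γ', rk y = n+1} r_y R_{n-k}` of `R(Γ)`. -/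
noncomputable def Rnk (rk : Γ → ℕ) (n k : ℕ) : Submodule F (RGamma F rk) :=
  ⨆ (y : Vert Γ) (_ : rk y.1 = n + 1),
    Submodule.map (LinearMap.mulLeft F (rbar F rk y)) (Rcomp F rk (n - k))

/-! ### Auxiliary lemmas -/

lemma rk_lt_of_lt {rk : Γ → ℕ} (hrk : IsRanked rk) {a b : Γ} (h : a < b) : rk a < rk b := by
  have main : ∀ a : Γ, ∀ b, a < b → rk a < rk b := by
    intro a
    refine (wellFounded_gt (α := Γ)).induction
      (C := fun a => ∀ b, a < b → rk a < rk b) a ?_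
    intro a ih b hab
    obtain ⟨c, hac, hcb⟩ := hab.exists_covby_le
    rcases eq_or_lt_of_le hcb with rfl | hlt
    · rw [hrk.2 a c hac]; omega
    · have h1 := hrk.2 a c hac
      have h2 := ih c hac.lt b hlt
      omega
  exact main a b h

lemma rk_le_of_le {rk : Γ → ℕ} (hrk : IsRanked rk) {a b : Γ} (h : a ≤ b) : rk a ≤ rk b := by
  rcases eq_or_lt_of_le h with rfl | hlt
  · exact le_rfl
  · exact (rk_lt_of_lt hrk hlt).le

lemma one_le_rk {rk : Γ → ℕ} (hrk : IsRanked rk) (y : Vert Γ) : 1 ≤ rk y.1 := by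
  have := rk_lt_of_lt hrk (bot_lt_iff_ne_bot.2 y.2)
  omega

lemma rbar_mul_zero (rk : Γ → ℕ) {z y : Vert Γ} (h : y.1 ∉ rankSet rk z.1 1) :
    rbar F rk z * rbar F rk y = 0 := by
  rw [rbar, rbar, ← map_mul, RingQuot.mkAlgHom_rel F (GRel.mono z y h), map_zero]

lemma rxnbar_eq_sum (rk : Γ → ℕ) (x : Γ) (m : ℕ) :
    rxnbar F rk x m =
      ∑ z ∈ Finset.univ.filter (fun z : Vert Γ => z.1 ∈ rankSet rk x m), rbar F rk z := by
  rw [rxnbar, rxn, map_sum]; rfl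

lemma dGamma_mul_rbar (rk : Γ → ℕ) (hrk : IsRanked rk) {d n : ℕ} {x : Vert Γ}
    (hx : ∀ y : Γ, y ≤ x.1) (hxr : rk x.1 = d + 1) {y : Vert Γ}
    (hy : rk y.1 = n + 1) (hn : n ≤ d) :
    dGamma F rk * rbar F rk y = rxnbar F rk x.1 (d - n - 1) * rbar F rk y := by
  rw [dGamma, rxnbar_eq_sum, Finset.sum_mul, Finset.sum_mul]
  refine (Finset.sum_subset (Finset.subset_univ _) ?_).symm
  intro z _ hz
  apply rbar_mul_zero
  intro hmem
  apply hz
  obtain ⟨hyz, hryz⟩ := hmem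
  have hzx := rk_le_of_le hrk (hx z.1)
  simp only [Finset.mem_filter, Finset.mem_univ, true_and, rankSet, Set.mem_setOf_eq]
  exact ⟨hx z.1, by omega⟩

lemma dGamma_mul_rbar_top (rk : Γ → ℕ) (hrk : IsRanked rk) {d : ℕ} {x : Vert Γ}
    (hx : ∀ y : Γ, y ≤ x.1) (hxr : rk x.1 = d + 1) {y : Vert Γ} (hy : rk y.1 = d + 1) :
    dGamma F rk * rbar F rk y = 0 := by
  rw [dGamma, Finset.sum_mul]
  apply Finset.sum_eq_zero
  intro z _
  apply rbar_mul_zero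
  intro hmem
  obtain ⟨hyz, hryz⟩ := hmem
  have hzx := rk_le_of_le hrk (hx z.1)
  omega

lemma Rnk_le_Rcomp (rk : Γ → ℕ) {n k : ℕ} : Rnk F rk n k ≤ Rcomp F rk (n - k + 1) := by
  rw [Rnk]
  refine iSup_le fun y => iSup_le fun hy => ?_
  intro s hs
  rw [Submodule.mem_map] at hs
  obtain ⟨t, ht, rfl⟩ := hs
  rw [Rcomp, Submodule.mem_map] at ht
  obtain ⟨u, hu, rfl⟩ := ht
  rw [Rcomp, Submodule.mem_map]
  refine ⟨gen F y * u, ?_, ?_⟩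
  · rw [pow_succ']
    exact Submodule.mul_mem_mul (Submodule.subset_span ⟨y, rfl⟩) hu
  · simp [rbar, AlgHom.toLinearMap_apply, map_mul, LinearMap.mulLeft_apply]

/-- Let `Γ` be a uniform ranked poset whose maximum element `x`
has rank `d+1` (so `Γ = Γ_x`), and `R = R(Γ)`.  Then `d_Γ = Σ_{k=0}^{d} r_x(k)`, and
for all `0 ≤ k ≤ n ≤ d` and every `s ∈ R(n,k)` one has `d_Γ·s = r_x(d−n−1)·s`; in
particular `d_Γ·R(n,k) ⊆ R(n+1,k)` (with `d_Γ·R(d,k) = 0`), so that `(R(·,k), d_Γ)`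
is a cochain complex. -/
theorem dGamma_cochain (rk : Γ → ℕ) (hrk : IsRanked rk) (hU : Uniform rk)
    (d : ℕ) (x : Vert Γ) (hx : ∀ y : Γ, y ≤ x.1) (hxr : rk x.1 = d + 1) :
    (dGamma F rk = ∑ k ∈ Finset.range (d + 1), rxnbar F rk x.1 k) ∧
    (∀ k n : ℕ, k ≤ n → n ≤ d → ∀ s ∈ Rnk F rk n k,
      dGamma F rk * s = rxnbar F rk x.1 (d - n - 1) * s) ∧
    (∀ k n : ℕ, k ≤ n → n ≤ d → ∀ s ∈ Rnk F rk n k,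
      dGamma F rk * s ∈ Rnk F rk (n + 1) k) ∧
    (∀ k : ℕ, k ≤ d → ∀ s ∈ Rnk F rk d k, dGamma F rk * s = 0) := by
  have hrkle : ∀ y : Γ, rk y ≤ d + 1 := by
    intro y
    have := rk_le_of_le hrk (hx y)
    omega
  -- Conjunct 1
  have conj1 : dGamma F rk = ∑ k ∈ Finset.range (d + 1), rxnbar F rk x.1 k := by
    have hmaps : ∀ y : Vert Γ, y ∈ (Finset.univ : Finset (Vert Γ)) →
        d + 1 - rk y.1 ∈ Finset.range (d + 1) := by
      intro y _
      have h1 := one_le_rk hrk y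
      simp only [Finset.mem_range]
      omega
    have hfil : ∀ k ∈ Finset.range (d + 1),
        Finset.univ.filter (fun y : Vert Γ => y.1 ∈ rankSet rk x.1 k) =
        Finset.univ.filter (fun y : Vert Γ => d + 1 - rk y.1 = k) := by
      intro k hk
      ext y
      have h1 := one_le_rk hrk y
      have h2 := hrkle y.1
      simp only [Finset.mem_filter, Finset.mem_univ, true_and, rankSet, Set.mem_setOf_eq,
        hx y.1, hxr]
      omega
    calc dGamma F rk
        = ∑ y : Vert Γ, rbar F rk y := rfl
      _ = ∑ k ∈ Finset.range (d + 1),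
            ∑ y ∈ Finset.univ.filter (fun y : Vert Γ => d + 1 - rk y.1 = k), rbar F rk y :=
          (Finset.sum_fiberwise_of_maps_to hmaps _).symm
      _ = ∑ k ∈ Finset.range (d + 1), rxnbar F rk x.1 k := by
          refine Finset.sum_congr rfl fun k hk => ?_
          rw [rxnbar_eq_sum, hfil k hk]
  -- Conjunct 2
  have conj2 : ∀ k n : ℕ, k ≤ n → n ≤ d → ∀ s ∈ Rnk F rk n k,
      dGamma F rk * s = rxnbar F rk x.1 (d - n - 1) * s := by
    intro k n hkn hnd s hs
    have hker : Rnk F rk n k ≤ LinearMap.ker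
        (LinearMap.mulLeft F (dGamma F rk) -
          LinearMap.mulLeft F (rxnbar F rk x.1 (d - n - 1))) := by
      rw [Rnk]
      refine iSup_le fun y => iSup_le fun hy => ?_
      intro t ht
      rw [Submodule.mem_map] at ht
      obtain ⟨u, -, rfl⟩ := ht
      simp only [LinearMap.mem_ker, LinearMap.sub_apply, LinearMap.mulLeft_apply]
      rw [← mul_assoc, ← mul_assoc, dGamma_mul_rbar F rk hrk hx hxr hy hnd, sub_self]
    have := hker hs
    simp only [LinearMap.mem_ker, LinearMap.sub_apply, LinearMap.mulLeft_apply,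
      sub_eq_zero] at this
    exact this
  -- Conjunct 4
  have conj4 : ∀ k : ℕ, k ≤ d → ∀ s ∈ Rnk F rk d k, dGamma F rk * s = 0 := by
    intro k hkd s hs
    have hker : Rnk F rk d k ≤ LinearMap.ker (LinearMap.mulLeft F (dGamma F rk)) := by
      rw [Rnk]
      refine iSup_le fun y => iSup_le fun hy => ?_
      intro t ht
      rw [Submodule.mem_map] at ht
      obtain ⟨u, -, rfl⟩ := ht
      simp only [LinearMap.mem_ker, LinearMap.mulLeft_apply]
      rw [← mul_assoc, dGamma_mul_rbar_top F rk hrk hx hxr hy, zero_mul]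
    have := hker hs
    simpa only [LinearMap.mem_ker, LinearMap.mulLeft_apply] using this
  -- Conjunct 3
  have conj3 : ∀ k n : ℕ, k ≤ n → n ≤ d → ∀ s ∈ Rnk F rk n k,
      dGamma F rk * s ∈ Rnk F rk (n + 1) k := by
    intro k n hkn hnd s hs
    rcases eq_or_lt_of_le hnd with rfl | hlt
    · rw [conj4 k hkn s hs]
      exact Submodule.zero_mem _
    · rw [conj2 k n hkn hnd s hs, rxnbar_eq_sum, Finset.sum_mul]
      apply Submodule.sum_mem
      intro z hz
      simp only [Finset.mem_filter, Finset.mem_univ, true_and, rankSet,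
        Set.mem_setOf_eq] at hz
      have hz2 : rk z.1 = n + 1 + 1 := by
        have := hz.2
        omega
      have hsR : s ∈ Rcomp F rk (n + 1 - k) := by
        have h1 := Rnk_le_Rcomp F rk (n := n) (k := k) hs
        have he : n - k + 1 = n + 1 - k := by omega
        rwa [he] at h1
      have hle : Submodule.map (LinearMap.mulLeft F (rbar F rk z))
          (Rcomp F rk (n + 1 - k)) ≤ Rnk F rk (n + 1) k := by
        rw [Rnk]
        exact le_iSup_of_le z (le_iSup_of_le hz2 le_rfl)
      exact hle (Submodule.mem_map.2 ⟨s, hsR, by simp [LinearMap.mulLeft_apply]⟩)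
  exact ⟨conj1, conj2, conj3, conj4⟩
end

section
/- Let Γ be a uniform ranked poset whose maximum element x has rank d+1 (so Γ = Γ_x) with d ≥ 2, and let R = R(Γ). For every 0 ≤ k < d−1, the set {s ∈ R(d−1,k) : r_x·s = 0} equals r_x(1)·R(d−2,k). Equivalently, H^{d−1}(R(·,k), d_Γ) = 0 for all 0 ≤ k < d−1. -/
set_option linter.unusedSectionVars false
set_option linter.unusedVariables false

open scoped Classical

variable {Γ : Type*} [PartialOrder Γ] [OrderBot Γ] [Fintype Γ]

variable (F : Type*) [Field F]

/-!
Write `I` for the kernel of `T(W) → R(Γ)` and `∂_y` for the left derivative of the free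
algebra, `∂_y (r_z T) = δ_{yz} T`. Let `T ∈ Σ_{y ∈ S_x(1)} r_y T(W)` be homogeneous with
`r_x T ∈ I`. Applying `∂_x` to a presentation of `r_x T` by the defining relations shows
`T ∈ Σ_{z ∉ S_x(1)} r_z T(W) + r_x(1) T(W) + I`. The operator `Σ_{y ∈ S_x(1)} r_y ∂_y` fixes `T`
and `r_x(1) T(W)`, kills the first summand and maps `I` into `I`, so `T ≡ r_x(1) q` modulo `I`.
Since `I` is homogeneous, `q` may be taken homogeneous of the right degree, and as `r_y r_z ∈ I`
whenever `z ∉ S_y(1)`, only the terms `r_z ∂_z q` with `rk z = d - 1` survive in `r_x(1) q`,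
which puts it into `r_x(1) R(d-2,k)`.
-/

namespace RingQuot

variable {S A : Type*} [CommRing S] [Ring A] [Algebra S A] {s : A → A → Prop}

theorem mem_of_mkAlgHom_eq_zero {M : Submodule S A}
    (hM : ∀ a b c c', s a b → c * (a - b) * c' ∈ M) {x : A} (hx : mkAlgHom S s x = 0) :
    x ∈ M := by
  have hRel : ∀ a b, Rel s a b → ∀ c c', c * (a - b) * c' ∈ M := by
    intro a b h
    induction h with
    | of h => exact fun c c' => hM _ _ c c' h
    | add_left _ ih => simpa only [add_sub_add_right_eq_sub] using ih
    | @mul_left a b d _ ih => intro c c'; simpa only [← sub_mul, mul_assoc] using ih c (d * c')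
    | @mul_right d a b _ ih => intro c c'; simpa only [← mul_sub, mul_assoc] using ih (c * d) c'
  have hEqv : Relation.EqvGen (Rel s) x 0 := by
    have h : mkRingHom s x = mkRingHom s 0 := by
      rw [← mkAlgHom_coe S, RingHom.coe_coe, hx, map_zero]
    simp only [mkRingHom_def, RingHom.coe_mk, MonoidHom.coe_mk, OneHom.coe_mk, mk.injEq] at h
    exact Quot.eq.1 h
  have hSub : ∀ a b, Relation.EqvGen (Rel s) a b → a - b ∈ M := by
    intro a b h
    induction h with
    | rel a b h => simpa using hRel a b h 1 1
    | refl => simp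
    | symm _ _ _ ih => simpa using M.neg_mem ih
    | trans _ _ _ _ _ ih₁ ih₂ => simpa using M.add_mem ih₁ ih₂
  simpa using hSub x 0 hEqv

end RingQuot

namespace FreeAlgebra

open Module Submodule

variable {R X : Type*} [CommSemiring R]

local notation "𝕎" => span R (Set.range (ι R : X → FreeAlgebra R X))
local notation "𝔟" => basisFreeMonoid R X

theorem basisFreeMonoid_apply (w : FreeMonoid X) : 𝔟 w = FreeMonoid.lift (ι R) w := by
  simp [basisFreeMonoid, equivMonoidAlgebraFreeMonoid]

theorem basisFreeMonoid_one : 𝔟 1 = 1 := by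
  simp [basisFreeMonoid_apply]

theorem basisFreeMonoid_mul (w w' : FreeMonoid X) : 𝔟 (w * w') = 𝔟 w * 𝔟 w' := by
  simp [basisFreeMonoid_apply]

theorem basisFreeMonoid_of_mul (x : X) (w : FreeMonoid X) :
    𝔟 (FreeMonoid.of x * w) = ι R x * 𝔟 w := by
  simp [basisFreeMonoid_apply]

theorem span_range_ι_pow (m : ℕ) : 𝕎 ^ m = span R (𝔟 '' {w | w.length = m}) := by
  induction m with
  | zero =>
    simp [Submodule.one_eq_span, FreeMonoid.length_eq_zero, basisFreeMonoid_one]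
  | succ m ih =>
    rw [pow_succ', ih, span_mul_span]
    congr 1
    ext T
    constructor
    · rintro ⟨_, ⟨x, rfl⟩, _, ⟨w, hw, rfl⟩, rfl⟩
      exact ⟨FreeMonoid.of x * w, by simp_all [FreeMonoid.length_mul, add_comm],
        basisFreeMonoid_of_mul x w⟩
    · rintro ⟨w, hw, rfl⟩
      induction w using FreeMonoid.casesOn with
      | one => simp at hw
      | of_mul x w =>
        rw [basisFreeMonoid_of_mul]
        refine Set.mul_mem_mul ⟨x, rfl⟩ ⟨w, ?_, rfl⟩
        simpa [FreeMonoid.length_mul, add_comm] using hw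

theorem basisFreeMonoid_mem_pow (w : FreeMonoid X) : 𝔟 w ∈ 𝕎 ^ w.length := by
  rw [span_range_ι_pow]
  exact subset_span ⟨w, rfl, rfl⟩

noncomputable def leftDeriv (y : X) : FreeAlgebra R X →ₗ[R] FreeAlgebra R X :=
  (basisFreeMonoid R X).constr R fun w =>
    FreeMonoid.casesOn w 0 fun z t => if z = y then 𝔟 t else 0

theorem leftDeriv_ι_mul (y z : X) (T : FreeAlgebra R X) :
    leftDeriv y (ι R z * T) = if z = y then T else 0 := by
  have h : leftDeriv y ∘ₗ LinearMap.mulLeft R (ι R z) = if z = y then LinearMap.id else 0 := by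
    refine (basisFreeMonoid R X).ext fun w => ?_
    simp only [LinearMap.comp_apply, LinearMap.mulLeft_apply, ← basisFreeMonoid_of_mul,
      leftDeriv, Basis.constr_basis, FreeMonoid.casesOn_of_mul]
    split_ifs <;> simp
  rw [← LinearMap.mulLeft_apply (R := R), ← LinearMap.comp_apply, h]
  split_ifs <;> rfl

theorem leftDeriv_mem_pow (y : X) {j : ℕ} {T : FreeAlgebra R X} (hT : T ∈ 𝕎 ^ (j + 1)) :
    leftDeriv y T ∈ 𝕎 ^ j := by
  rw [span_range_ι_pow] at hT
  refine (span_le (p := comap (leftDeriv y) (𝕎 ^ j)).2 ?_ hT : _)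
  rintro _ ⟨w, hw, rfl⟩
  induction w using FreeMonoid.casesOn with
  | one => simp at hw
  | of_mul x w =>
    simp only [SetLike.mem_coe, mem_comap, basisFreeMonoid_of_mul, leftDeriv_ι_mul]
    split_ifs
    · have : w.length = j := by simp_all [FreeMonoid.length_mul, add_comm]
      simpa [this] using basisFreeMonoid_mem_pow (R := R) w
    · exact zero_mem _

def leftSpan (s : Set X) : Submodule R (FreeAlgebra R X) :=
  ⨆ z ∈ s, LinearMap.range (LinearMap.mulLeft R (ι R z))

theorem ι_mul_mem_leftSpan {s : Set X} {z : X} (hz : z ∈ s) (T : FreeAlgebra R X) :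
    ι R z * T ∈ leftSpan s :=
  mem_iSup_of_mem z (mem_iSup_of_mem hz ⟨T, rfl⟩)

theorem leftSpan_mono {s t : Set X} (h : s ⊆ t) : leftSpan (R := R) s ≤ leftSpan t :=
  biSup_mono h

theorem leftSpan_le {s : Set X} {M : Submodule R (FreeAlgebra R X)}
    (h : ∀ z ∈ s, ∀ T, ι R z * T ∈ M) : leftSpan s ≤ M :=
  iSup₂_le fun z hz => LinearMap.range_le_iff_comap.2 (eq_top_iff.2 fun T _ => h z hz T)

theorem leftDeriv_eq_zero_of_mem_leftSpan {s : Set X} {y : X} (hy : y ∉ s)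
    {T : FreeAlgebra R X} (hT : T ∈ leftSpan s) : leftDeriv y T = 0 :=
  leftSpan_le (M := LinearMap.ker (leftDeriv y)) (fun z hz T => by
    rw [LinearMap.mem_ker, leftDeriv_ι_mul, if_neg (ne_of_mem_of_not_mem hz hy)]) hT

theorem sum_ι_mul_leftDeriv (s : Finset X) {T : FreeAlgebra R X}
    (hT : T ∈ leftSpan (s : Set X)) : ∑ y ∈ s, ι R y * leftDeriv y T = T := by
  have := leftSpan_le (M := LinearMap.eqLocus
    (∑ y ∈ s, LinearMap.mulLeft R (ι R y) ∘ₗ leftDeriv y) LinearMap.id)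
    (fun z hz T => by simp_all [leftDeriv_ι_mul]) hT
  simpa using this

theorem pow_succ_le_leftSpan_univ (j : ℕ) : 𝕎 ^ (j + 1) ≤ leftSpan Set.univ := by
  rw [span_range_ι_pow, span_le]
  rintro _ ⟨w, hw, rfl⟩
  induction w using FreeMonoid.casesOn with
  | one => simp at hw
  | of_mul x w => rw [basisFreeMonoid_of_mul]; exact ι_mul_mem_leftSpan (Set.mem_univ x) _

theorem sum_ι_mul_leftDeriv_of_mem_pow [Fintype X] {j : ℕ} {T : FreeAlgebra R X}
    (hT : T ∈ 𝕎 ^ (j + 1)) : ∑ y, ι R y * leftDeriv y T = T :=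
  sum_ι_mul_leftDeriv Finset.univ (by simpa using pow_succ_le_leftSpan_univ j hT)

noncomputable def homogeneousProj (m : ℕ) : FreeAlgebra R X →ₗ[R] FreeAlgebra R X :=
  (basisFreeMonoid R X).constr R fun w => if w.length = m then 𝔟 w else 0

theorem homogeneousProj_basisFreeMonoid (m : ℕ) (w : FreeMonoid X) :
    homogeneousProj m (𝔟 w) = if w.length = m then 𝔟 w else 0 :=
  Basis.constr_basis _ _ _ _

theorem homogeneousProj_of_mem {j : ℕ} (m : ℕ) {T : FreeAlgebra R X} (hT : T ∈ 𝕎 ^ j) :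
    homogeneousProj m T = if j = m then T else 0 := by
  have : 𝕎 ^ j ≤
      LinearMap.eqLocus (homogeneousProj m) (if j = m then LinearMap.id else 0) := by
    rw [span_range_ι_pow, span_le]
    rintro _ ⟨w, rfl, rfl⟩
    rw [SetLike.mem_coe, LinearMap.mem_eqLocus, homogeneousProj_basisFreeMonoid]
    split_ifs <;> rfl
  rw [LinearMap.mem_eqLocus.1 (this hT)]
  split_ifs <;> rfl

theorem homogeneousProj_mem (m : ℕ) (T : FreeAlgebra R X) : homogeneousProj m T ∈ 𝕎 ^ m := by
  have : ⊤ ≤ comap (homogeneousProj m) (𝕎 ^ m) := by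
    rw [← (basisFreeMonoid R X).span_eq, span_le]
    rintro _ ⟨w, rfl⟩
    rw [SetLike.mem_coe, mem_comap, homogeneousProj_basisFreeMonoid]
    split_ifs with h
    · exact h ▸ basisFreeMonoid_mem_pow w
    · exact zero_mem _
  exact this mem_top

theorem homogeneousProj_mul {i : ℕ} (j : ℕ) {a : FreeAlgebra R X} (ha : a ∈ 𝕎 ^ i)
    (T : FreeAlgebra R X) : homogeneousProj (i + j) (a * T) = a * homogeneousProj j T := by
  have : 𝕎 ^ i ≤ LinearMap.eqLocus ((LinearMap.mul R _).compr₂ (homogeneousProj (i + j)))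
      ((LinearMap.mul R _).compl₂ (homogeneousProj j)) := by
    rw [span_range_ι_pow, span_le]
    rintro _ ⟨w, rfl, rfl⟩
    refine (basisFreeMonoid R X).ext fun w' => ?_
    simp [← basisFreeMonoid_mul, homogeneousProj_basisFreeMonoid, FreeMonoid.length_mul]
  simpa using LinearMap.congr_fun (this ha) T

end FreeAlgebra

section QuadraticAlgebra

open FreeAlgebra Submodule

variable {F} {rk : Γ → ℕ}

local notation "mk" => RingQuot.mkAlgHom F (GRel F rk)

variable (F rk) in
noncomputable def relIdeal : Submodule F (FreeAlgebra F (Vert Γ)) :=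
  LinearMap.ker (RingQuot.mkAlgHom F (GRel F rk)).toLinearMap

theorem mem_relIdeal {T : FreeAlgebra F (Vert Γ)} : T ∈ relIdeal F rk ↔ mk T = 0 := Iff.rfl

theorem mul_mem_relIdeal_left (a : FreeAlgebra F (Vert Γ)) {T : FreeAlgebra F (Vert Γ)}
    (hT : T ∈ relIdeal F rk) : a * T ∈ relIdeal F rk := by
  rw [mem_relIdeal, map_mul, mem_relIdeal.1 hT, mul_zero]

theorem mul_mem_relIdeal_right {T : FreeAlgebra F (Vert Γ)} (hT : T ∈ relIdeal F rk)
    (a : FreeAlgebra F (Vert Γ)) : T * a ∈ relIdeal F rk := by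
  rw [mem_relIdeal, map_mul, mem_relIdeal.1 hT, zero_mul]

theorem mem_relIdeal_of_rel {u v : FreeAlgebra F (Vert Γ)} (h : GRel F rk u v) :
    u ∈ relIdeal F rk := by
  have hv : v = 0 := by cases h <;> rfl
  rw [mem_relIdeal, RingQuot.mkAlgHom_rel F h, hv, map_zero]

theorem relIdeal_le_span_words : relIdeal F rk ≤ span F {T | ∃ w₁ w₂ u, GRel F rk u 0 ∧
    T = basisFreeMonoid F (Vert Γ) w₁ * u * basisFreeMonoid F (Vert Γ) w₂} := by
  intro T hT
  refine RingQuot.mem_of_mkAlgHom_eq_zero (fun a b c c' h => ?_) hT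
  obtain rfl : b = 0 := by cases h <;> rfl
  have hc : ∀ c, c ∈ span F (Set.range (basisFreeMonoid F (Vert Γ))) := fun c => by
    simp [Module.Basis.span_eq]
  have := mul_mem_mul (mul_mem_mul (hc c) (mem_span_singleton_self a)) (hc c')
  rw [span_mul_span, span_mul_span] at this
  rw [sub_zero]
  refine span_mono ?_ this
  rintro _ ⟨_, ⟨_, ⟨w₁, rfl⟩, _, rfl, rfl⟩, _, ⟨w₂, rfl⟩, rfl⟩
  exact ⟨w₁, w₂, _, h, rfl⟩

theorem rxn_mem_span (x : Γ) (n : ℕ) : rxn F rk x n ∈ span F (Set.range (ι F)) :=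
  sum_mem fun y _ => subset_span ⟨y, rfl⟩

theorem mem_pow_two_of_rel {u v : FreeAlgebra F (Vert Γ)} (h : GRel F rk u v) :
    u ∈ span F (Set.range (ι F)) ^ 2 := by
  rw [sq]
  cases h with
  | mono p q => exact mul_mem_mul (subset_span ⟨p, rfl⟩) (subset_span ⟨q, rfl⟩)
  | adj p => exact mul_mem_mul (subset_span ⟨p, rfl⟩) (rxn_mem_span p.1 1)

theorem homogeneousProj_mem_relIdeal (m : ℕ) {T : FreeAlgebra F (Vert Γ)}
    (hT : T ∈ relIdeal F rk) : homogeneousProj m T ∈ relIdeal F rk := by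
  refine (span_le (p := comap (homogeneousProj m) (relIdeal F rk)).2 ?_
    (relIdeal_le_span_words hT) : _)
  rintro _ ⟨w₁, w₂, u, hu, rfl⟩
  have hdeg := mul_mem_mul (mul_mem_mul (basisFreeMonoid_mem_pow w₁) (mem_pow_two_of_rel hu))
    (basisFreeMonoid_mem_pow w₂)
  rw [← pow_add, ← pow_add] at hdeg
  rw [SetLike.mem_coe, mem_comap, homogeneousProj_of_mem m hdeg]
  split_ifs
  · exact mul_mem_relIdeal_right (mul_mem_relIdeal_left _ (mem_relIdeal_of_rel hu)) _
  · exact zero_mem _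

variable (F rk) in
/-- What `∂_y` makes of the defining relations: an explicit part of `{T | r_y T ∈ I}`. -/
noncomputable def annSpan (y : Vert Γ) : Submodule F (FreeAlgebra F (Vert Γ)) :=
  leftSpan {z | z.1 ∉ rankSet rk y.1 1} ⊔
    LinearMap.range (LinearMap.mulLeft F (rxn F rk y.1 1)) ⊔ relIdeal F rk

theorem gen_mul_mem_relIdeal_of_mem_annSpan {y : Vert Γ} {T : FreeAlgebra F (Vert Γ)}
    (hT : T ∈ annSpan F rk y) : gen F y * T ∈ relIdeal F rk := by
  suffices annSpan F rk y ≤ comap (LinearMap.mulLeft F (gen F y)) (relIdeal F rk) from this hT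
  refine sup_le (sup_le ?_ ?_) ?_
  · refine leftSpan_le fun z hz T => ?_
    rw [mem_comap, LinearMap.mulLeft_apply, ← mul_assoc]
    exact mul_mem_relIdeal_right (mem_relIdeal_of_rel (GRel.mono y z hz)) _
  · rintro _ ⟨T, rfl⟩
    rw [mem_comap, LinearMap.mulLeft_apply, LinearMap.mulLeft_apply, ← mul_assoc]
    exact mul_mem_relIdeal_right (mem_relIdeal_of_rel (GRel.adj y)) _
  · exact fun T hT => mul_mem_relIdeal_left _ hT

theorem leftDeriv_mem_annSpan (y : Vert Γ) {T : FreeAlgebra F (Vert Γ)}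
    (hT : T ∈ relIdeal F rk) : leftDeriv y T ∈ annSpan F rk y := by
  refine (span_le (p := comap (leftDeriv y) (annSpan F rk y)).2 ?_
    (relIdeal_le_span_words hT) : _)
  rintro _ ⟨w₁, w₂, u, hu, rfl⟩
  rw [SetLike.mem_coe, mem_comap]
  induction w₁ using FreeMonoid.casesOn with
  | one =>
    rw [basisFreeMonoid_one, one_mul]
    cases hu with
    | mono p q hq =>
      rw [gen, gen, mul_assoc, leftDeriv_ι_mul]
      split_ifs with hp
      · subst hp
        exact mem_sup_left (mem_sup_left (ι_mul_mem_leftSpan hq _))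
      · exact zero_mem _
    | adj p =>
      rw [gen, mul_assoc, leftDeriv_ι_mul]
      split_ifs with hp
      · subst hp
        exact mem_sup_left (mem_sup_right ⟨_, rfl⟩)
      · exact zero_mem _
  | of_mul z w =>
    rw [basisFreeMonoid_of_mul, mul_assoc, mul_assoc, leftDeriv_ι_mul]
    split_ifs
    · rw [← mul_assoc]
      exact mem_sup_right
        (mul_mem_relIdeal_right (mul_mem_relIdeal_left _ (mem_relIdeal_of_rel hu)) _)
    · exact zero_mem _

theorem exists_sub_rxn_mul_mem_relIdeal {x : Vert Γ} {T : FreeAlgebra F (Vert Γ)}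
    (hT : T ∈ leftSpan {y | y.1 ∈ rankSet rk x.1 1}) (hxT : gen F x * T ∈ relIdeal F rk) :
    ∃ q, T - rxn F rk x.1 1 * q ∈ relIdeal F rk := by
  set S := Finset.univ.filter fun y : Vert Γ => y.1 ∈ rankSet rk x.1 1
  have hS : (S : Set (Vert Γ)) = {y | y.1 ∈ rankSet rk x.1 1} := by ext; simp [S]
  have hTx : T ∈ annSpan F rk x := by
    simpa [gen, leftDeriv_ι_mul] using leftDeriv_mem_annSpan x hxT
  obtain ⟨_, hPQ, E, hE, rfl⟩ := mem_sup.1 hTx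
  obtain ⟨P, hP, _, ⟨q, rfl⟩, rfl⟩ := mem_sup.1 hPQ
  refine ⟨q, ?_⟩
  have hP0 : ∑ y ∈ S, ι F y * leftDeriv y P = 0 :=
    Finset.sum_eq_zero fun y hy => by
      rw [leftDeriv_eq_zero_of_mem_leftSpan (by simpa [S] using hy) hP, mul_zero]
  have hq : rxn F rk x.1 1 * q ∈ leftSpan (S : Set (Vert Γ)) := by
    rw [rxn, Finset.sum_mul]
    exact sum_mem fun y hy => ι_mul_mem_leftSpan hy q
  have hπ := sum_ι_mul_leftDeriv S (hS ▸ hT)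
  simp only [LinearMap.mulLeft_apply, map_add, mul_add, Finset.sum_add_distrib, hP0,
    sum_ι_mul_leftDeriv S hq, zero_add] at hπ
  rw [LinearMap.mulLeft_apply, ← hπ, add_sub_cancel_left]
  exact sum_mem fun y _ => gen_mul_mem_relIdeal_of_mem_annSpan (leftDeriv_mem_annSpan y hE)

theorem rbar_mul_rxnbar_one (x : Vert Γ) : rbar F rk x * rxnbar F rk x.1 1 = 0 := by
  rw [rbar, rxnbar, ← map_mul]
  exact mem_relIdeal_of_rel (GRel.adj x)

theorem rxnbar_one_mul_rbar {x : Γ} {z : Vert Γ} (hz : rk z.1 + 2 ≠ rk x) :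
    rxnbar F rk x 1 * rbar F rk z = 0 := by
  rw [rxnbar, rxn, map_sum, Finset.sum_mul]
  refine Finset.sum_eq_zero fun y hy => ?_
  rw [← rbar, rbar, rbar, ← map_mul]
  refine mem_relIdeal_of_rel (GRel.mono y z fun h => hz ?_)
  have hy1 := (Finset.mem_filter.1 hy).2.2
  have hzy := h.2
  omega

theorem Rnk_le_map (n k : ℕ) : Rnk F rk n k ≤
    (leftSpan {y | rk y.1 = n + 1} ⊓ span F (Set.range (ι F)) ^ (n - k + 1)).map
      (mk).toLinearMap := by
  refine iSup₂_le fun y hy => ?_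
  rintro _ ⟨_, ⟨t, ht, rfl⟩, rfl⟩
  have hy' : y ∈ {y : Vert Γ | rk y.1 = n + 1} := hy
  refine ⟨ι F y * t, ⟨ι_mul_mem_leftSpan hy' t, ?_⟩, by simp [rbar, gen]⟩
  rw [pow_succ']
  exact mul_mem_mul (subset_span ⟨y, rfl⟩) ht

theorem rxnbar_one_mul_mem_map_Rnk {x : Γ} {m k : ℕ} (hx : rk x = m + 3)
    {u : FreeAlgebra F (Vert Γ)} (hu : u ∈ span F (Set.range (ι F)) ^ (m - k + 1)) :
    rxnbar F rk x 1 * mk u ∈ (Rnk F rk m k).map (LinearMap.mulLeft F (rxnbar F rk x 1)) := by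
  refine ⟨∑ z ∈ Finset.univ.filter fun z : Vert Γ => rk z.1 = m + 1,
    rbar F rk z * mk (leftDeriv z u), sum_mem fun z hz => ?_, ?_⟩
  · exact mem_iSup_of_mem z (mem_iSup_of_mem (Finset.mem_filter.1 hz).2
      ⟨_, ⟨_, leftDeriv_mem_pow z hu, rfl⟩, rfl⟩)
  · calc rxnbar F rk x 1 * ∑ z ∈ Finset.univ.filter fun z : Vert Γ => rk z.1 = m + 1,
          rbar F rk z * mk (leftDeriv z u)
        = ∑ z, rxnbar F rk x 1 * (rbar F rk z * mk (leftDeriv z u)) := by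
          rw [Finset.mul_sum]
          refine Finset.sum_filter_of_ne fun z _ h => ?_
          by_contra hz
          rw [← mul_assoc, rxnbar_one_mul_rbar (by omega), zero_mul] at h
          exact h rfl
      _ = rxnbar F rk x 1 * mk u := by
          rw [← Finset.mul_sum]
          conv_rhs => rw [← sum_ι_mul_leftDeriv_of_mem_pow hu]
          simp [rbar, gen]

theorem ker_inf_Rnk_le_map {x : Vert Γ} (hx : ∀ y : Γ, y ≤ x.1) {m k : ℕ}
    (hxr : rk x.1 = m + 3) (hk : k ≤ m) :
    LinearMap.ker (LinearMap.mulLeft F (rbar F rk x)) ⊓ Rnk F rk (m + 1) k ≤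
      (Rnk F rk m k).map (LinearMap.mulLeft F (rxnbar F rk x.1 1)) := by
  rintro _ ⟨hxs, hs⟩
  obtain ⟨T, ⟨hTS, hTW⟩, rfl⟩ := Rnk_le_map (m + 1) k hs
  have hTSx : T ∈ leftSpan {y | y.1 ∈ rankSet rk x.1 1} := by
    refine leftSpan_mono ?_ hTS
    intro y (hy : rk y.1 = m + 1 + 1)
    exact ⟨hx y, by omega⟩
  have hxT : gen F x * T ∈ relIdeal F rk := by simpa [mem_relIdeal, rbar] using hxs
  obtain ⟨q, hq⟩ := exists_sub_rxn_mul_mem_relIdeal hTSx hxT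
  have hu : T - rxn F rk x.1 1 * homogeneousProj (m - k + 1) q ∈ relIdeal F rk := by
    have hr : rxn F rk x.1 1 ∈ span F (Set.range (ι F)) ^ 1 := by
      rw [pow_one]; exact rxn_mem_span _ 1
    have := homogeneousProj_mem_relIdeal (1 + (m - k + 1)) hq
    rwa [map_sub, homogeneousProj_mul _ hr,
      homogeneousProj_of_mem _ hTW, if_pos (by omega)] at this
  rw [mem_relIdeal, map_sub, sub_eq_zero, map_mul] at hu
  simpa [hu, rxnbar] using rxnbar_one_mul_mem_map_Rnk hxr (homogeneousProj_mem (m - k + 1) q)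

theorem map_rxnbar_one_Rnk_le {x : Γ} {m k : ℕ} (hx : rk x = m + 3) (hk : k ≤ m) :
    (Rnk F rk m k).map (LinearMap.mulLeft F (rxnbar F rk x 1)) ≤ Rnk F rk (m + 1) k := by
  rw [map_le_iff_le_comap]
  refine iSup₂_le fun z hz => ?_
  rintro _ ⟨_, ⟨t, ht, rfl⟩, rfl⟩
  rw [mem_comap, LinearMap.mulLeft_apply, LinearMap.mulLeft_apply, rxnbar, rxn, map_sum,
    Finset.sum_mul]
  refine sum_mem fun y hy => mem_iSup_of_mem y (mem_iSup_of_mem ?_ ⟨mk (gen F z * t), ?_, ?_⟩)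
  · have hy1 := (Finset.mem_filter.1 hy).2.2
    omega
  · refine ⟨gen F z * t, ?_, rfl⟩
    rw [show m + 1 - k = 1 + (m - k) by omega, pow_add, pow_one]
    exact mul_mem_mul (subset_span ⟨z, rfl⟩) ht
  · simp [rbar]

end QuadraticAlgebra

theorem cohomology_subtop (rk : Γ → ℕ)
    (d : ℕ) (x : Vert Γ) (hx : ∀ y : Γ, y ≤ x.1) (hxr : rk x.1 = d + 1) :
    ∀ k : ℕ, k < d - 1 →
      LinearMap.ker (LinearMap.mulLeft F (rbar F rk x)) ⊓ Rnk F rk (d - 1) k =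
        Submodule.map (LinearMap.mulLeft F (rxnbar F rk x.1 1)) (Rnk F rk (d - 2) k) := by
  intro k hk
  obtain ⟨m, rfl⟩ : ∃ m, d = m + 2 := ⟨d - 2, by omega⟩
  have hkm : k ≤ m := by omega
  have hxr' : rk x.1 = m + 3 := hxr
  refine le_antisymm (ker_inf_Rnk_le_map hx hxr' hkm) (le_inf ?_ (map_rxnbar_one_Rnk_le hxr' hkm))
  rintro _ ⟨s, -, rfl⟩
  rw [LinearMap.mem_ker, LinearMap.mulLeft_apply, LinearMap.mulLeft_apply, ← mul_assoc,
    rbar_mul_rxnbar_one, zero_mul]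
end
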